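/- Let η be a regular uncountable cardinal such that the set of measurable cardinals below η is stationary in η. Then for every uncountable regular cardinal δ with δ < η, η is δ-Erdős. -/

import Mathlib

/-!
Since `η` has uncountable cofinality, the limit points of the club `C` above `δ` form a club, so
by stationarity one of them is a measurable cardinal `μ > δ`. Take a `μ`-complete
nonprincipal ultrafilter concentrating on the ordinals below `μ`. Replacing it by its image under
the least function that is not constant on a measure-one set (the ultrapower order is well
founded by countable completeness) makes it normal: every regressive function is constant on a
measure-one set. Normality puts `C` in the ultrafilter, and, via diagonal intersections, gives
Rowbottom's argument: every function `f` of `n + 1` arguments has a measure-one set on whose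
increasing tuples `f` is either constant or at least its first argument. As there are only
countably many definable functions, one measure-one set `H ⊆ C` serves for all of them; it has
size at least `μ > δ`, so it contains a subset of order type `δ`.
-/

open FirstOrder Cardinal Ordinal

/-- The order type of a subset of a well-ordered type, as an ordinal. -/
noncomputable def setOrderType {α : Type*} [LinearOrder α] [WellFoundedLT α]
    (s : Set α) : Ordinal :=
  haveI : IsWellOrder _ (Subrel ((· < ·) : α → α → Prop) s) :=
    inferInstanceAs (IsWellOrder _ (Subrel ((· < ·) : α → α → Prop) (fun x => x ∈ s)))
  Ordinal.type (Subrel ((· < ·) : α → α → Prop) s)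

/-- The ordinal rank of an element of a well-ordered type. -/
noncomputable def ordRank {α : Type*} [LinearOrder α] [WellFoundedLT α] (a : α) : Ordinal :=
  @Ordinal.typein α (· < ·) isWellOrder_lt a

/-- `f` is an `n`-ary function definable in the structure `M` from parameters in `A`. -/
def DefinableFun (L : FirstOrder.Language.{0, 0}) {M : Type} [L.Structure M] (A : Set M)
    (n : ℕ) (f : (Fin n → M) → M) : Prop :=
  A.Definable L {x : Fin (n + 1) → M | x (Fin.last n) = f (fun i => x i.castSucc)}

/-- `C` is a closed unbounded subset (of a linear order standing for a cardinal `κ`). -/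
def IsClubIn {α : Type*} [LinearOrder α] (C : Set α) : Prop :=
  (∀ b : α, ∃ c ∈ C, b ≤ c) ∧
  ∀ a : α, (∃ b, b < a) → (∀ b < a, ∃ c ∈ C, b < c ∧ c < a) → a ∈ C

/-- `D` is a normal set of indiscernibles for the structure `M`: every definable
(without parameters) function `f` either satisfies `f d⃗ ≥ d₀` on all increasing tuples
from `D`, or is constant on all such tuples. -/
def IsNormalIndiscernibles (L : FirstOrder.Language.{0, 0}) {M : Type} [L.Structure M]
    [LinearOrder M] (D : Set M) : Prop :=
  ∀ (n : ℕ) (f : (Fin (n + 1) → M) → M), DefinableFun L (∅ : Set M) (n + 1) f →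
    (∀ d : Fin (n + 1) → M, StrictMono d → (∀ i, d i ∈ D) → d 0 ≤ f d) ∨
    ∃ y : M, ∀ d : Fin (n + 1) → M, StrictMono d → (∀ i, d i ∈ D) → f d = y

/-- `κ` is `δ`-Erdős: for every structure in a countable language whose universe is
(a canonical type of order type) `κ` and every closed unbounded set `C`, there is a
`D ⊆ C` of order type `δ` which is a normal set of indiscernibles for the structure. -/
def IsErdos (δ κ : Cardinal.{0}) : Prop :=
  ∀ (L : FirstOrder.Language.{0, 0}) [L.Structure κ.ord.ToType], Countable L.Symbols →
    ∀ C : Set κ.ord.ToType, IsClubIn C →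
      ∃ D ⊆ C, setOrderType D = δ.ord ∧ IsNormalIndiscernibles L D

/-- `μ` is a measurable cardinal: `μ` is uncountable and there is a nonprincipal
ultrafilter on (a canonical type of order type) `μ` closed under intersections of
families of fewer than `μ` of its members. -/
def IsMeasurableCard (μ : Cardinal.{0}) : Prop :=
  ℵ₀ < μ ∧ ∃ U : Ultrafilter μ.ord.ToType,
    (∀ a : μ.ord.ToType, {a} ∉ U) ∧
    ∀ s : Set (Set μ.ord.ToType), (∀ t ∈ s, t ∈ U) → #s < μ → ⋂₀ s ∈ U

open Filter Set

universe u

section OrderType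

variable {M : Type u} [LinearOrder M] [WellFoundedLT M]

theorem mk_Iio_eq_card_ordRank (a : M) : #(Iio a) = (ordRank a).card :=
  (@card_typein M (· < ·) _ a).symm

theorem mk_Iic_lt_of_lt {a b : M} {μ : Cardinal.{u}} (hμ : ℵ₀ ≤ μ) (ha : ordRank a = μ.ord)
    (hb : b < a) : #(Iic b) < μ := by
  have hIio : #(Iio b) < μ := by
    rw [mk_Iio_eq_card_ordRank, ← lt_ord, ← ha]
    exact (typein_lt_typein _).2 hb
  rw [← Iio_insert]
  exact mk_insert_le.trans_lt (add_lt_of_lt hμ hIio (one_lt_aleph0.trans_le hμ))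

theorem setOrderType_range_of_strictMono {γ : Type u} [LinearOrder γ] [WellFoundedLT γ]
    {f : γ → M} (hf : StrictMono f) : setOrderType (range f) = typeLT γ :=
  (hf.orderIso f).toRelIsoLT.ordinalType_congr.symm

theorem exists_subset_setOrderType_eq {s : Set M} {c : Cardinal.{u}} (h : c ≤ #s) :
    ∃ D ⊆ s, setOrderType D = c.ord := by
  have hle : typeLT c.ord.ToType ≤ typeLT s := by
    rwa [type_toType, ord_le, card_type]
  obtain ⟨f⟩ := type_le_iff'.1 hle
  have hf : StrictMono fun x => (f x : M) := fun _ _ hxy => f.map_rel_iff.2 hxy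
  exact ⟨_, range_subset_iff.2 fun x => (f x).2,
    (setOrderType_range_of_strictMono hf).trans (type_toType _)⟩

end OrderType

theorem exists_forall_lt_of_aleph0_lt_cof {α : Type u} [LinearOrder α]
    (h : ℵ₀ < Order.cof α) (s : ℕ → α) : ∃ u, ∀ n, s n < u := by
  by_contra! hs
  have hcof : IsCofinal (range s) := fun a =>
    let ⟨n, hn⟩ := hs a
    ⟨s n, mem_range_self n, hn⟩
  exact ((Order.cof_le hcof).trans (countable_range s).le_aleph0).not_gt h

section AccPts

variable {M : Type u} [LinearOrder M]

def accPts (C : Set M) : Set M :=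
  {a | (∃ b, b < a) ∧ ∀ b < a, ∃ c ∈ C, b < c ∧ c < a}

theorem IsClubIn.accPts_subset {C : Set M} (hC : IsClubIn C) : accPts C ⊆ C :=
  fun a ha => hC.2 a ha.1 ha.2

theorem accPts_accPts_inter_Ioi_subset (C : Set M) (e : M) :
    accPts (accPts C ∩ Ioi e) ⊆ accPts C ∩ Ioi e := by
  rintro x ⟨⟨b, hb⟩, hx⟩
  refine ⟨⟨⟨b, hb⟩, fun b' hb' => ?_⟩, ?_⟩
  · obtain ⟨c', ⟨hc', -⟩, hb'c', hc'x⟩ := hx b' hb'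
    obtain ⟨c, hc, hb'c, hcc'⟩ := hc'.2 b' hb'c'
    exact ⟨c, hc, hb'c, hcc'.trans hc'x⟩
  · obtain ⟨c', ⟨-, hec'⟩, -, hc'x⟩ := hx b hb
    exact hec'.trans hc'x

theorem exists_mem_accPts_gt [WellFoundedLT M] (hM : ∀ s : ℕ → M, ∃ u, ∀ n, s n < u)
    {C : Set M} (hC : ∀ b, ∃ c ∈ C, b < c) (b : M) : ∃ x ∈ accPts C, b < x := by
  choose next hnextC hnext using hC
  let s : ℕ → M := fun n => next^[n + 1] b
  have hsC (n : ℕ) : s n ∈ C := by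
    simp only [s, Function.iterate_succ_apply']
    exact hnextC _
  have hs (n : ℕ) : s n < s (n + 1) := by
    simp only [s, Function.iterate_succ_apply' next (n + 1)]
    exact hnext _
  obtain ⟨z, hz, hzmin⟩ := wellFounded_lt.has_min {u | ∀ n, s n < u} (hM s)
  refine ⟨z, ⟨⟨s 0, hz 0⟩, fun b' hb' => ?_⟩, (hnext b).trans (hz 0)⟩
  obtain ⟨n, hn⟩ : ∃ n, b' ≤ s n := by
    by_contra! h
    exact hzmin b' h hb'
  exact ⟨s (n + 1), hsC _, hn.trans_lt (hs n), hz _⟩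

theorem IsClubIn.accPts_inter_Ioi [WellFoundedLT M] (hM : ∀ s : ℕ → M, ∃ u, ∀ n, s n < u)
    {C : Set M} (hC : IsClubIn C) (e : M) : IsClubIn (accPts C ∩ Ioi e) := by
  have hCgt (b : M) : ∃ c ∈ C, b < c :=
    let ⟨u, hu⟩ := hM fun _ => b
    let ⟨c, hc, huc⟩ := hC.1 u
    ⟨c, hc, (hu 0).trans_le huc⟩
  refine ⟨fun b => ?_, fun a h₁ h₂ => accPts_accPts_inter_Ioi_subset C e ⟨h₁, h₂⟩⟩
  obtain ⟨x, hx, hbx⟩ := exists_mem_accPts_gt hM hCgt (max b e)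
  exact ⟨x, ⟨hx, (le_max_right _ _).trans_lt hbx⟩, (le_max_left _ _).trans hbx.le⟩

end AccPts

section Homogeneous

variable {M : Type u} [LinearOrder M]

def IsNormalHomogeneous (H : Set M) {n : ℕ} (f : (Fin (n + 1) → M) → M) : Prop :=
  (∀ d : Fin (n + 1) → M, StrictMono d → (∀ i, d i ∈ H) → d 0 ≤ f d) ∨
    ∃ y, ∀ d : Fin (n + 1) → M, StrictMono d → (∀ i, d i ∈ H) → f d = y

theorem IsNormalHomogeneous.mono {H H' : Set M} {n : ℕ} {f : (Fin (n + 1) → M) → M}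
    (h : IsNormalHomogeneous H f) (hH : H' ⊆ H) : IsNormalHomogeneous H' f :=
  h.imp (fun h d hd hdH => h d hd fun i => hH (hdH i))
    fun ⟨y, h⟩ => ⟨y, fun d hd hdH => h d hd fun i => hH (hdH i)⟩

theorem strictMono_tail_and_mem_of_forall_lt_mem {n : ℕ} {H : M → Set M} {d : Fin (n + 2) → M}
    (hd : StrictMono d) (hdH : ∀ i, ∀ b < d i, d i ∈ H b) :
    StrictMono (Fin.tail d) ∧ ∀ i, Fin.tail d i ∈ H (d 0) :=
  ⟨hd.comp Fin.strictMono_succ, fun i => hdH i.succ (d 0) (hd (Fin.succ_pos i))⟩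

end Homogeneous

namespace Ultrafilter

section Normal

variable {M : Type u} [LinearOrder M] {U : Ultrafilter M}

def IsNormal (U : Ultrafilter M) : Prop :=
  ∀ g : M → M, (∀ᶠ x in U, g x < x) → ∃ y, ∀ᶠ x in U, g x = y

theorem IsNormal.exists_eventually_of_eventually_exists_lt (hU : U.IsNormal)
    {p : M → M → Prop} (h : ∀ᶠ x in U, ∃ b < x, p b x) : ∃ b, ∀ᶠ x in U, p b x := by
  choose g hg using fun x =>
    ((em (∃ b < x, p b x)).elim (fun ⟨b, hb⟩ => ⟨b, fun _ => hb⟩)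
      fun h => ⟨x, fun h' => absurd h' h⟩ : ∃ b, (∃ b < x, p b x) → b < x ∧ p b x)
  obtain ⟨y, hy⟩ := hU g (h.mono fun x hx => (hg x hx).1)
  exact ⟨y, (h.and hy).mono fun x ⟨hx, hgx⟩ => hgx ▸ (hg x hx).2⟩

theorem IsNormal.eventually_forall_lt (hU : U.IsNormal) {p : M → M → Prop}
    (hp : ∀ b, ∀ᶠ x in U, p b x) : ∀ᶠ x in U, ∀ b < x, p b x := by
  by_contra h
  obtain ⟨b, hb⟩ := hU.exists_eventually_of_eventually_exists_lt (p := fun b x => ¬p b x)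
    ((eventually_not.2 h).mono fun x hx => by push Not at hx; exact hx)
  obtain ⟨x, hnx, hx⟩ := (hb.and (hp b)).exists
  exact hnx hx

theorem IsNormal.eventually_le_or_exists_eventually_eq (hU : U.IsNormal) (g : M → M) :
    (∀ᶠ x in U, x ≤ g x) ∨ ∃ y, ∀ᶠ x in U, g x = y :=
  (U.em fun x => x ≤ g x).imp_right fun h => hU g (h.mono fun _ hx => not_le.1 hx)

theorem IsNormal.mem_of_mem_accPts (hU : U.IsNormal) {a : M} (hIio : Iio a ∈ U)
    (hIoi : ∀ b < a, Ioi b ∈ U) {C : Set M} (hC : accPts C ⊆ C) (ha : a ∈ accPts C) :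
    C ∈ U := by
  by_contra hCU
  obtain ⟨b₀, hb₀⟩ := ha.1
  have hgap : ∀ᶠ x in U, ∃ b < x, b < x ∧ ∀ c ∈ C, b < c → x ≤ c := by
    filter_upwards [compl_mem_iff_notMem.2 hCU, hIoi b₀ hb₀] with x hxC hx
    have hx' : x ∉ accPts C := fun h => hxC (hC h)
    simp only [accPts, mem_ofPred_eq, not_and, not_forall] at hx'
    obtain ⟨b, hb, hgap⟩ := hx' ⟨b₀, hx⟩
    exact ⟨b, hb, hb, fun c hc hbc => not_lt.1 fun hcx => hgap ⟨c, hc, hbc, hcx⟩⟩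
  obtain ⟨γ, hγ⟩ := hU.exists_eventually_of_eventually_exists_lt hgap
  obtain ⟨x, hγx, hxa⟩ := (hγ.and hIio).exists
  obtain ⟨c, hc, hγc, hca⟩ := ha.2 γ (hγx.1.trans hxa)
  obtain ⟨x, hx, hcx⟩ := (hγ.and (hIoi c hca)).exists
  exact (hx.2 c hc hγc).not_gt hcx

theorem IsNormal.exists_mem_isNormalHomogeneous (hU : U.IsNormal) :
    ∀ {n : ℕ} (f : (Fin (n + 1) → M) → M), ∃ H ∈ U, IsNormalHomogeneous H f
  | 0, f => by
    have hf (d : Fin 1 → M) : f d = f fun _ => d 0 :=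
      congrArg f (funext fun i => congrArg d (Subsingleton.elim i 0))
    rcases hU.eventually_le_or_exists_eventually_eq fun x => f fun _ => x with h | ⟨y, h⟩
    · exact ⟨_, h, Or.inl fun d _ hd => (hf d).symm ▸ hd 0⟩
    · exact ⟨_, h, Or.inr ⟨y, fun d _ hd => (hf d).trans (hd 0)⟩⟩
  | n + 1, f => by
    choose H hHU hH using fun a => hU.exists_mem_isNormalHomogeneous fun d => f (Fin.cons a d)
    have hH' (a : M) : ∃ y,
        (∀ d : Fin (n + 1) → M, StrictMono d → (∀ i, d i ∈ H a) → d 0 ≤ f (Fin.cons a d)) ∨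
        ∀ d : Fin (n + 1) → M, StrictMono d → (∀ i, d i ∈ H a) → f (Fin.cons a d) = y :=
      (hH a).elim (fun h => ⟨a, Or.inl h⟩) fun ⟨y, h⟩ => ⟨y, Or.inr h⟩
    choose c hc using hH'
    have hΔ := hU.eventually_forall_lt hHU
    rcases eventually_or.1 (Eventually.of_forall (f := (U : Filter M)) hc) with hge | hconst
    · refine ⟨_, hge.and hΔ, Or.inl fun d hd hdH => ?_⟩
      obtain ⟨htail, htH⟩ := strictMono_tail_and_mem_of_forall_lt_mem hd fun i => (hdH i).2
      calc d 0 ≤ Fin.tail d 0 := (hd (Fin.succ_pos 0)).le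
        _ ≤ f (Fin.cons (d 0) (Fin.tail d)) := (hdH 0).1 _ htail htH
        _ = f d := by rw [Fin.cons_self_tail]
    rcases hU.eventually_le_or_exists_eventually_eq c with hle | ⟨y, hy⟩
    · refine ⟨_, (hconst.and hΔ).and hle, Or.inl fun d hd hdH => ?_⟩
      obtain ⟨htail, htH⟩ := strictMono_tail_and_mem_of_forall_lt_mem hd fun i => (hdH i).1.2
      calc d 0 ≤ c (d 0) := (hdH 0).2
        _ = f d := by rw [← (hdH 0).1.1 _ htail htH, Fin.cons_self_tail]
    · refine ⟨_, (hconst.and hΔ).and hy, Or.inr ⟨y, fun d hd hdH => ?_⟩⟩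
      obtain ⟨htail, htH⟩ := strictMono_tail_and_mem_of_forall_lt_mem hd fun i => (hdH i).1.2
      rw [← Fin.cons_self_tail d, (hdH 0).1.1 _ htail htH, (hdH 0).2]

theorem IsNormal.exists_mem_forall_isNormalHomogeneous [CountableInterFilter (U : Filter M)]
    (hU : U.IsNormal) {F : ∀ n : ℕ, Set ((Fin (n + 1) → M) → M)} (hF : ∀ n, (F n).Countable) :
    ∃ H ∈ U, ∀ n, ∀ f ∈ F n, IsNormalHomogeneous H f := by
  choose H hHU hH using fun n (f : (Fin (n + 1) → M) → M) => hU.exists_mem_isNormalHomogeneous f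
  refine ⟨⋂ n, ⋂ f ∈ F n, H n f,
    countable_iInter_mem.2 fun n => (countable_bInter_mem (hF n)).2 fun f _ => hHU n f,
    fun n f hf => (hH n f).mono ((iInter_subset _ n).trans (biInter_subset_of_mem hf))⟩

end Normal

end Ultrafilter

theorem wellFounded_eventually_lt {α M : Type*} [Preorder M] [WellFoundedLT M] (l : Filter α)
    [l.NeBot] [CountableInterFilter l] :
    WellFounded fun f g : α → M => ∀ᶠ x in l, f x < g x := by
  refine wellFounded_iff_isEmpty_descending_chain.2 ⟨fun ⟨F, hF⟩ => ?_⟩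
  obtain ⟨x, hx⟩ := (eventually_countable_forall.2 hF).exists
  exact (wellFounded_iff_isEmpty_descending_chain.1 wellFounded_lt).false ⟨(F · x), hx⟩

theorem Ultrafilter.exists_isNormal {M : Type u} [LinearOrder M] [WellFoundedLT M]
    {μ : Cardinal.{u}} (hμ : ℵ₀ < μ) (U : Ultrafilter M) [CardinalInterFilter (U : Filter M) μ]
    (hU : ∀ x, {x} ∉ U) {a : M} (ha : Iio a ∈ U) :
    ∃ V : Ultrafilter M, V.IsNormal ∧ CountableInterFilter (V : Filter M) ∧ Iio a ∈ V ∧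
      ∀ s ∈ V, μ ≤ #s := by
  have := CardinalInterFilter.toCountableInterFilter (U : Filter M) hμ
  have hid : id ∈ {f : M → M | ∀ y, ¬∀ᶠ x in U, f x = y} := hU
  obtain ⟨f, hf, hmin⟩ := (wellFounded_eventually_lt (U : Filter M)).has_min _ ⟨id, hid⟩
  refine ⟨U.map f, fun g hg => ?_, by rw [coe_map]; infer_instance, ?_, fun s hs => ?_⟩
  · by_contra h
    exact hmin (g ∘ f) (fun y hy => h ⟨y, hy⟩) hg
  · have hfle : ∀ᶠ x in U, f x ≤ x := by
      simpa using eventually_not.2 (hmin id hid)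
    exact mem_map.2 ((hfle.and ha).mono fun x hx => hx.1.trans_lt hx.2)
  · by_contra! hsμ
    have hfs : ∀ᶠ x in U, ∀ y ∈ s, f x ≠ y :=
      (eventually_cardinal_ball hsμ).2 fun y _ => eventually_not.2 (hf y)
    obtain ⟨x, hx, hxs⟩ := (hfs.and (mem_map.1 hs)).exists
    exact hx _ hxs rfl

theorem IsMeasurableCard.exists_ultrafilter {μ : Cardinal.{0}} (hμ : IsMeasurableCard μ)
    {M : Type} {S : Set M} (hS : #S = μ) :
    ∃ U : Ultrafilter M, S ∈ U ∧ (∀ x, {x} ∉ U) ∧ CardinalInterFilter (U : Filter M) μ := by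
  obtain ⟨-, U₀, hU₀, hcomp⟩ := hμ
  obtain ⟨e⟩ : Nonempty (μ.ord.ToType ≃ S) := Cardinal.eq.1 (by rw [mk_ord_toType, hS])
  have he : Function.Injective (Subtype.val ∘ e) := Subtype.val_injective.comp e.injective
  refine ⟨U₀.map (Subtype.val ∘ e), Ultrafilter.mem_map.2 (univ_mem' fun b => (e b).2),
    fun x hx => ?_, ?_⟩
  · obtain ⟨b, hb⟩ := Ultrafilter.nonempty_of_mem (Ultrafilter.mem_map.1 hx)
    exact hU₀ b (mem_of_superset (Ultrafilter.mem_map.1 hx) fun b' hb' => he (hb'.trans hb.symm))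
  · have : CardinalInterFilter (U₀ : Filter μ.ord.ToType) μ := ⟨fun s hs hmem => hcomp s hmem hs⟩
    rw [Ultrafilter.coe_map]
    infer_instance

theorem countable_setOf_definableFun (L : FirstOrder.Language.{0, 0}) [Countable L.Symbols]
    {M : Type} [L.Structure M] (n : ℕ) :
    {f : (Fin n → M) → M | DefinableFun L ∅ n f}.Countable := by
  have hgraph : Function.Injective fun f : (Fin n → M) → M =>
      {x : Fin (n + 1) → M | x (Fin.last n) = f fun i => x i.castSucc} := by
    intro f g hfg
    funext v
    simpa using congrArg (Fin.snoc v (f v) ∈ ·) hfg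
  refine ((countable_range fun φ : L.Formula (Fin (n + 1)) => {x | φ.Realize x}).preimage
    hgraph).mono fun f hf => ?_
  obtain ⟨φ, hφ⟩ := Set.empty_definable_iff.1 hf
  exact ⟨φ, hφ.symm⟩

theorem erdos_of_stationary_measurables_general
    (η : Cardinal.{0}) (hη : η.IsRegular) (hη' : ℵ₀ < η)
    (hstat : ∀ C : Set η.ord.ToType, IsClubIn C →
      ({a : η.ord.ToType | ∃ μ : Cardinal.{0}, IsMeasurableCard μ ∧ ordRank a = μ.ord}
        ∩ C).Nonempty)
    (δ : Cardinal.{0}) (hδη : δ < η) :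
    IsErdos δ η := by
  intro L _ hL C hC
  have hM : ∀ s : ℕ → η.ord.ToType, ∃ u, ∀ n, s n < u :=
    exists_forall_lt_of_aleph0_lt_cof (by rwa [Ordinal.cof_toType, hη.cof_ord])
  obtain ⟨e, he⟩ := typein_surj (· < ·) (show δ.ord < typeLT η.ord.ToType by
    rwa [type_toType, ord_lt_ord])
  obtain ⟨a, ⟨μ, hμ, ha⟩, haC, hea⟩ := hstat _ (hC.accPts_inter_Ioi hM e)
  have hδμ : δ < μ := by
    rw [← ord_lt_ord, ← ha]
    exact he ▸ (typein_lt_typein _).2 hea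
  obtain ⟨U₀, hU₀a, hU₀, _⟩ := hμ.exists_ultrafilter (S := Iio a) (by
    rw [mk_Iio_eq_card_ordRank, ha, card_ord])
  obtain ⟨U, hU, _, hUa, hUμ⟩ := U₀.exists_isNormal hμ.1 hU₀ hU₀a
  have hUgt (b : η.ord.ToType) (hb : b < a) : Ioi b ∈ U := by
    simpa using Ultrafilter.compl_mem_iff_notMem.2 fun h =>
      (hUμ _ h).not_gt (mk_Iic_lt_of_lt hμ.1.le ha hb)
  have hCU : C ∈ U := hU.mem_of_mem_accPts hUa hUgt hC.accPts_subset haC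
  obtain ⟨H, hHU, hH⟩ := hU.exists_mem_forall_isNormalHomogeneous
    (F := fun n => {f | DefinableFun L ∅ (n + 1) f}) fun n => countable_setOf_definableFun L _
  obtain ⟨D, hD, hDδ⟩ := exists_subset_setOrderType_eq (hδμ.le.trans (hUμ _ (inter_mem hCU hHU)))
  exact ⟨D, hD.trans inter_subset_left, hDδ,
    fun n f hf => (hH n f hf).mono (hD.trans inter_subset_right)⟩

/-- If `η` is a regular uncountable cardinal such that the set of measurable cardinals
below `η` is stationary in `η`, then for every uncountable regular cardinal `δ < η`,
`η` is `δ`-Erdős. -/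
theorem erdos_of_stationary_measurables
    (η : Cardinal.{0}) (hη : η.IsRegular) (hη' : ℵ₀ < η)
    (hstat : ∀ C : Set η.ord.ToType, IsClubIn C →
      ({a : η.ord.ToType | ∃ μ : Cardinal.{0}, IsMeasurableCard μ ∧ ordRank a = μ.ord}
        ∩ C).Nonempty)
    (δ : Cardinal.{0}) (hδ : δ.IsRegular) (hδ' : ℵ₀ < δ) (hδη : δ < η) :
    IsErdos δ η :=
  erdos_of_stationary_measurables_general η hη hη' hstat δ hδη
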